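/- arXiv:2104.03505 — 2 statements merged into one kernel-verified Lean document; each statement's English description precedes it below -/
import Mathlib

section
/- Let X be a locally compact Hausdorff space, Y a metric space, f : X → Y continuous, and U a neighborhood of p ∈ X. If f is U-proper at p and (f|_U)⁻¹(f(p)) = {p}, then f is strongly U-proper at p. -/
open Metric Set

def UProperAt {X Y : Type*} [TopologicalSpace X] [TopologicalSpace Y]
    (f : X → Y) (U : Set X) (p : X) : Prop :=
  ∃ K : Set Y, IsCompact K ∧ f p ∈ interior K ∧
    IsCompact {x ∈ U | f x ∈ K} ∧ {x ∈ U | f x ∈ K} ⊆ U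

def StronglyUProperAt {X Y : Type*} [TopologicalSpace X] [TopologicalSpace Y]
    (f : X → Y) (U : Set X) (p : X) : Prop :=
  ∀ V ∈ nhds p, V ⊆ U → ∃ K : Set Y, IsCompact K ∧ f p ∈ interior K ∧
    IsCompact {x ∈ U | f x ∈ K} ∧ {x ∈ U | f x ∈ K} ⊆ V

def ProperAt {X Y : Type*} [TopologicalSpace X] [TopologicalSpace Y]
    (f : X → Y) (p : X) : Prop :=
  ∃ U ∈ nhds p, StronglyUProperAt f U p

theorem stmt_6 {X Y : Type*} [TopologicalSpace X] [T2Space X] [LocallyCompactSpace X]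
    [MetricSpace Y] (f : X → Y) (hf : Continuous f) (p : X) (U : Set X) (hU : U ∈ nhds p)
    (hproper : UProperAt f U p) (hfib : {x ∈ U | f x = f p} = {p}) :
    StronglyUProperAt f U p := by
  obtain ⟨K, hKc, hKint, hCc, -⟩ := hproper
  intro V hV hVU
  set C : ℕ → Set X := fun n => {x ∈ U | f x ∈ K ∩ closedBall (f p) (1 / (n + 1))} with hC
  have hCeq : ∀ n, C n = {x ∈ U | f x ∈ K} ∩ f ⁻¹' closedBall (f p) (1 / (n + 1)) := by
    intro n; ext x; simp [hC]; tauto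
  have hCcpt : ∀ n, IsCompact (C n) := by
    intro n
    rw [hCeq]
    exact hCc.inter_right (isClosed_closedBall.preimage hf)
  have hmono : ∀ m n : ℕ, m ≤ n → C n ⊆ C m := by
    rintro m n hmn x ⟨hxU, hxK, hxb⟩
    refine ⟨hxU, hxK, mem_closedBall.mpr (le_trans (mem_closedBall.mp hxb) ?_)⟩
    have : (m:ℝ) ≤ n := by exact_mod_cast hmn
    gcongr
  have hdir : Directed (· ⊇ ·) C := fun m n =>
    ⟨max m n, hmono _ _ (le_max_left _ _), hmono _ _ (le_max_right _ _)⟩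
  have hinter : (⋂ n, C n) ⊆ {p} := by
    intro x hx
    simp only [mem_iInter] at hx
    have hxU : x ∈ U := (hx 0).1
    have hdist : dist (f x) (f p) = 0 := by
      have hle : ∀ n : ℕ, dist (f x) (f p) ≤ 1 / (n + 1) := fun n =>
        mem_closedBall.mp (hx n).2.2
      have h0 : dist (f x) (f p) ≤ 0 :=
        ge_of_tendsto' tendsto_one_div_add_atTop_nhds_zero_nat hle
      linarith [dist_nonneg (x := f x) (y := f p)]
    have : x ∈ ({x ∈ U | f x = f p} : Set X) := ⟨hxU, by rwa [← dist_eq_zero]⟩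
    rw [hfib] at this
    exact this
  obtain ⟨n, hn⟩ : ∃ n, C n ⊆ V := by
    apply exists_subset_nhds_of_isCompact' hdir hCcpt (fun n => (hCcpt n).isClosed)
    intro x hx
    have : x = p := hinter hx
    rwa [this]
  refine ⟨K ∩ closedBall (f p) (1 / (n + 1)), hKc.inter_right isClosed_closedBall, ?_, ?_, ?_⟩
  · rw [interior_inter]
    refine ⟨hKint, interior_mono ball_subset_closedBall ?_⟩
    rw [interior_eq_iff_isOpen.mpr isOpen_ball]
    exact mem_ball_self (by positivity)
  · exact hCcpt n
  · exact hn
end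

section
/- Let X₁, X₂ be locally compact Hausdorff spaces, Y a metric space, and f_i : (X_i, p_i) → (Y, P) continuous maps with f₁(p₁) = f₂(p₂) = P. Suppose f₂ is U₂-proper at p₂ and {x ∈ U₂ : f₂(x) = P} = {p₂}. Then the following are equivalent: (1) there exist neighborhoods V_i ⊆ U_i of p_i with f₁(V₁) ⊆ f₂(V₂); (2) there exist r > 0 and neighborhoods V_i ⊆ U_i of p_i with f₁(V₁) ∩ ball(P,r) ⊆ f₂(V₂) ∩ ball(P,r); (3) for all neighborhoods V_i ⊆ U_i of p_i there exist relatively compact neighborhoods W_i of p_i with closure(W_i) ⊆ V_i and f₁(W₁) ⊆ f₂(W₂). -/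
open Metric Set

theorem stmt_12 {X₁ X₂ Y : Type*} [TopologicalSpace X₁] [T2Space X₁] [LocallyCompactSpace X₁]
    [TopologicalSpace X₂] [T2Space X₂] [LocallyCompactSpace X₂] [MetricSpace Y]
    (f₁ : X₁ → Y) (f₂ : X₂ → Y) (hf₁ : Continuous f₁) (hf₂ : Continuous f₂)
    (p₁ : X₁) (p₂ : X₂) (P : Y) (hP₁ : f₁ p₁ = P) (hP₂ : f₂ p₂ = P)
    (U₁ : Set X₁) (hU₁ : U₁ ∈ nhds p₁) (U₂ : Set X₂) (hU₂ : U₂ ∈ nhds p₂)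
    (hproper : UProperAt f₂ U₂ p₂) (hfib : {x ∈ U₂ | f₂ x = P} = {p₂}) :
    ((∃ V₁ ∈ nhds p₁, ∃ V₂ ∈ nhds p₂, V₁ ⊆ U₁ ∧ V₂ ⊆ U₂ ∧ f₁ '' V₁ ⊆ f₂ '' V₂) ↔
      (∃ r > (0 : ℝ), ∃ V₁ ∈ nhds p₁, ∃ V₂ ∈ nhds p₂, V₁ ⊆ U₁ ∧ V₂ ⊆ U₂ ∧
        f₁ '' V₁ ∩ ball P r ⊆ f₂ '' V₂ ∩ ball P r)) ∧
    ((∃ V₁ ∈ nhds p₁, ∃ V₂ ∈ nhds p₂, V₁ ⊆ U₁ ∧ V₂ ⊆ U₂ ∧ f₁ '' V₁ ⊆ f₂ '' V₂) ↔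
      (∀ V₁ ∈ nhds p₁, ∀ V₂ ∈ nhds p₂, V₁ ⊆ U₁ → V₂ ⊆ U₂ →
        ∃ W₁ ∈ nhds p₁, ∃ W₂ ∈ nhds p₂,
          IsCompact (closure W₁) ∧ IsCompact (closure W₂) ∧
          closure W₁ ⊆ V₁ ∧ closure W₂ ⊆ V₂ ∧ f₁ '' W₁ ⊆ f₂ '' W₂)) := by
  obtain ⟨K, hKc, hPK, hCc, hCU⟩ := hproper
  rw [hP₂] at hPK
  constructor
  · constructor
    · rintro ⟨V₁, hV₁, V₂, hV₂, h1, h2, h3⟩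
      exact ⟨1, one_pos, V₁, hV₁, V₂, hV₂, h1, h2, fun y hy => ⟨h3 hy.1, hy.2⟩⟩
    · rintro ⟨r, hr, V₁, hV₁, V₂, hV₂, h1, h2, h3⟩
      refine ⟨V₁ ∩ f₁ ⁻¹' ball P r, ?_, V₂, hV₂,
        (inter_subset_left).trans h1, h2, ?_⟩
      · exact Filter.inter_mem hV₁
          (hf₁.continuousAt.preimage_mem_nhds (by rw [hP₁]; exact ball_mem_nhds P hr))
      · rintro y ⟨x, ⟨hx1, hx2⟩, rfl⟩
        exact (h3 ⟨mem_image_of_mem f₁ hx1, hx2⟩).1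
  · constructor
    · rintro ⟨V₁', hV₁', V₂', hV₂', h1, h2, h3⟩
      intro V₁ hV₁ V₂ hV₂ hVU₁ hVU₂
      -- compact neighborhood N' of p₂ inside V₂ ∩ V₂'
      obtain ⟨N', hN'mem, hN'sub, hN'c⟩ :=
        local_compact_nhds (Filter.inter_mem hV₂ hV₂')
      set N : Set X₂ := interior N' with hN
      have hNmem : N ∈ nhds p₂ := by
        rw [hN]; exact interior_mem_nhds.mpr hN'mem
      have hp₂N : p₂ ∈ N := mem_of_mem_nhds hNmem
      -- S = C \ N compact, P ∉ f₂ '' S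
      set C : Set X₂ := {x ∈ U₂ | f₂ x ∈ K} with hCdef
      have hSc : IsCompact (C \ N) := hCc.diff isOpen_interior
      have hPnot : P ∉ f₂ '' (C \ N) := by
        rintro ⟨x, ⟨⟨hxU, _⟩, hxN⟩, hxP⟩
        have : x ∈ ({x ∈ U₂ | f₂ x = P} : Set X₂) := ⟨hxU, hxP⟩
        rw [hfib] at this
        exact hxN (this ▸ hp₂N)
      -- find ε
      have hO : (f₂ '' (C \ N))ᶜ ∩ interior K ∈ nhds P := by
        refine Filter.inter_mem ?_ (isOpen_interior.mem_nhds hPK)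
        exact (hSc.image hf₂).isClosed.isOpen_compl.mem_nhds hPnot
      obtain ⟨ε, hε, hball⟩ := Metric.mem_nhds_iff.mp hO
      -- W₂
      set W₂ : Set X₂ := N ∩ f₂ ⁻¹' ball P ε with hW₂def
      have hW₂mem : W₂ ∈ nhds p₂ := Filter.inter_mem hNmem
        (hf₂.continuousAt.preimage_mem_nhds (by rw [hP₂]; exact ball_mem_nhds P hε))
      have hclW₂ : closure W₂ ⊆ N' :=
        closure_minimal ((inter_subset_left).trans interior_subset) hN'c.isClosed
      have hW₂key : f₂ '' V₂' ∩ ball P ε ⊆ f₂ '' W₂ := by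
        rintro y ⟨⟨x, hxV, rfl⟩, hyb⟩
        have hxO := hball hyb
        have hxC : x ∈ C := ⟨h2 hxV, interior_subset hxO.2⟩
        have hxN : x ∈ N := by
          by_contra hxN
          exact hxO.1 ⟨x, ⟨hxC, hxN⟩, rfl⟩
        exact ⟨x, ⟨hxN, hyb⟩, rfl⟩
      -- W₁
      have hT : V₁ ∩ V₁' ∩ f₁ ⁻¹' ball P ε ∈ nhds p₁ :=
        Filter.inter_mem (Filter.inter_mem hV₁ hV₁')
          (hf₁.continuousAt.preimage_mem_nhds (by rw [hP₁]; exact ball_mem_nhds P hε))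
      obtain ⟨M, hMmem, hMsub, hMc⟩ := local_compact_nhds hT
      refine ⟨interior M, interior_mem_nhds.mpr hMmem, W₂, hW₂mem, ?_, ?_, ?_, ?_, ?_⟩
      · exact (hMc.closure_of_subset interior_subset).of_isClosed_subset isClosed_closure
          (Subset.refl _) |>.of_isClosed_subset isClosed_closure (Subset.refl _)
      · exact hN'c.of_isClosed_subset isClosed_closure hclW₂
      · exact (closure_minimal interior_subset hMc.isClosed).trans
          (hMsub.trans ((inter_subset_left).trans inter_subset_left))
      · exact hclW₂.trans (hN'sub.trans inter_subset_left)
      · rintro y ⟨x, hx, rfl⟩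
        have hx' := hMsub (interior_subset hx)
        exact hW₂key ⟨h3 (mem_image_of_mem f₁ hx'.1.2), hx'.2⟩
    · intro h
      obtain ⟨W₁, hW₁, W₂, hW₂, _, _, hc₁, hc₂, him⟩ :=
        h U₁ hU₁ U₂ hU₂ (Subset.refl _) (Subset.refl _)
      exact ⟨W₁, hW₁, W₂, hW₂, subset_closure.trans hc₁, subset_closure.trans hc₂, him⟩
end
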